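/- arXiv:1204.2561 — 5 statements merged into one kernel-verified Lean document; each statement's English description precedes it below -/
import Mathlib

section
/- For any θ₁, θ₂ ∈ ℝ, the set BAD^Θ(2/3, 1/3) = {(η₁,η₂) ∈ ℝ² : inf_{q ∈ ℤ₊} max(q^{2/3}·‖qθ₁ − η₁‖, q^{1/3}·‖qθ₂ − η₂‖) > 0} is non-empty, where ‖·‖ denotes distance to the nearest integer. -/
open scoped BigOperators

/-- Distance from a real number to the nearest integer. -/
noncomputable def dni (x : ℝ) : ℝ := |x - round x|

/-- `1, θ₁, θ₂` are linearly independent over `ℚ` (equivalently over `ℤ`). -/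
def LinIndep (θ₁ θ₂ : ℝ) : Prop :=
  ∀ a b c : ℤ, (a : ℝ) + (b : ℝ) * θ₁ + (c : ℝ) * θ₂ = 0 → a = 0 ∧ b = 0 ∧ c = 0

/-- The weighted size `max(|m₁|, |m₂|²)` of an integer vector. -/
noncomputable def wsize (m : ℤ × ℤ) : ℝ := max |(m.1 : ℝ)| ((m.2 : ℝ) ^ 2)

/-- The value of the linear form `‖θ₁ m₁ + θ₂ m₂‖`. -/
noncomputable def zeta (θ₁ θ₂ : ℝ) (m : ℤ × ℤ) : ℝ := dni (θ₁ * m.1 + θ₂ * m.2)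

/-- `M = √(max(|m₁|, |m₂|²))`. -/
noncomputable def Mval (m : ℤ × ℤ) : ℝ := Real.sqrt (wsize m)

/-- `m = (m₁, m₂)` is a best approximation vector for `(θ₁, θ₂)` w.r.t. the
weighted norm `max(|x₁|, |x₂|²)`. -/
def IsBestApprox (θ₁ θ₂ : ℝ) (m : ℤ × ℤ) : Prop :=
  m ≠ 0 ∧ ∃ m₀ : ℤ,
    |(m₀ : ℝ) + θ₁ * m.1 + θ₂ * m.2| = zeta θ₁ θ₂ m ∧
    ∀ x₀ x₁ x₂ : ℤ,
      max |(x₁ : ℝ)| ((x₂ : ℝ) ^ 2) ≤ wsize m →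
      |(x₀ : ℝ) + θ₁ * x₁ + θ₂ * x₂| ≤ zeta θ₁ θ₂ m →
      ((x₀, x₁, x₂) = ((0 : ℤ), (0 : ℤ), (0 : ℤ)) ∨
        (x₀, x₁, x₂) = (m₀, m.1, m.2) ∨ (x₀, x₁, x₂) = (-m₀, -m.1, -m.2))

/-- An enumeration `m : ℕ → ℤ × ℤ` of all the best approximation vectors of
`(θ₁, θ₂)`, ordered so that `M_ν` is strictly increasing (each best
approximation appears up to sign). -/
def IsBestApproxSeq (θ₁ θ₂ : ℝ) (m : ℕ → ℤ × ℤ) : Prop :=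
  (∀ ν, IsBestApprox θ₁ θ₂ (m ν)) ∧
  (StrictMono fun ν => Mval (m ν)) ∧
  (∀ p : ℤ × ℤ, IsBestApprox θ₁ θ₂ p → ∃ ν, p = m ν ∨ p = -(m ν))

/-- `(η₁, η₂)` belongs to `BAD^Θ(2/3, 1/3)`. -/
def BADT (θ₁ θ₂ η₁ η₂ : ℝ) : Prop :=
  ∃ c > 0, ∀ q : ℕ, 0 < q →
    c ≤ max ((q : ℝ) ^ ((2 : ℝ) / 3) * dni (q * θ₁ - η₁))
          ((q : ℝ) ^ ((1 : ℝ) / 3) * dni (q * θ₂ - η₂))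

/-!
For `k ≥ 0` let `m_k` minimise `‖m₁θ₁ + m₂θ₂‖` over the nonzero integer vectors with
`|m₁| ≤ 16^k`, `|m₂| ≤ 4^k`; by Dirichlet's pigeonhole argument `‖m_k · θ‖ ≤ 64^{-k}`.
If `‖m_k · η‖ ≥ δ` for every `k`, then `η ∈ BAD^Θ(2/3, 1/3)`: the identity
`m · η = q (m · θ) - m₁ (qθ₁ - η₁) - m₂ (qθ₂ - η₂)`, at the scale `64^k ≍ q / δ`, gives
`δ / 2 ≤ 16^k ‖qθ₁ - η₁‖ + 4^k ‖qθ₂ - η₂‖`, and `16^k ≍ q^{2/3}`, `4^k ≍ q^{1/3}`.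

Such an `η` lies in nested rectangles of size `16^{-k-2} × 4^{-k-2}`. The vector `m_k` only
changes to a vector outside the previous box, so on the current rectangle the linear form
`z ↦ m_k · z` ranges over an interval of length between `1/256` and `5/16`; hence either the
subrectangle where it is smallest or the one where it is largest stays `1/4096` away from `ℤ`.
-/

open Set

lemma dni_eq_norm (x : ℝ) : dni x = ‖(x : AddCircle (1 : ℝ))‖ := by
  simp [dni, AddCircle.norm_eq]

lemma dni_le_abs_sub (x : ℝ) (n : ℤ) : dni x ≤ |x - n| := round_le x n

lemma le_dni_iff {δ x : ℝ} : δ ≤ dni x ↔ ∀ n : ℤ, δ ≤ |x - n| :=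
  ⟨fun h n => h.trans (dni_le_abs_sub x n), fun h => h _⟩

lemma dni_le_half (x : ℝ) : dni x ≤ 1 / 2 := abs_sub_round x

lemma zeta_le_transfer (θ₁ θ₂ η₁ η₂ : ℝ) (q : ℕ) (m : ℤ × ℤ) :
    zeta η₁ η₂ m ≤ |(m.1 : ℝ)| * dni (q * θ₁ - η₁) + |(m.2 : ℝ)| * dni (q * θ₂ - η₂)
      + q * zeta θ₁ θ₂ m := by
  set x : AddCircle (1 : ℝ) := ↑(θ₁ * m.1 + θ₂ * m.2)
  set y₁ : AddCircle (1 : ℝ) := ↑(q * θ₁ - η₁)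
  set y₂ : AddCircle (1 : ℝ) := ↑(q * θ₂ - η₂)
  have hη : ((η₁ * m.1 + η₂ * m.2 : ℝ) : AddCircle (1 : ℝ)) = q • x - m.1 • y₁ - m.2 • y₂ := by
    have : η₁ * m.1 + η₂ * m.2
        = q • (θ₁ * m.1 + θ₂ * m.2) - m.1 • (q * θ₁ - η₁) - m.2 • (q * θ₂ - η₂) := by
      simp only [nsmul_eq_mul, zsmul_eq_mul]; ring
    rw [this, AddCircle.coe_sub, AddCircle.coe_sub, AddCircle.coe_nsmul, AddCircle.coe_zsmul,
      AddCircle.coe_zsmul]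
  have h₁ := norm_zsmul_le m.1 y₁
  have h₂ := norm_zsmul_le m.2 y₂
  have h₃ := norm_nsmul_le (n := q) (a := x)
  have h₄ := norm_sub_le (q • x - m.1 • y₁) (m.2 • y₂)
  have h₅ := norm_sub_le (q • x) (m.1 • y₁)
  simp only [Int.norm_eq_abs] at h₁ h₂
  rw [zeta, zeta, dni_eq_norm, dni_eq_norm, dni_eq_norm, dni_eq_norm, hη]
  linarith

lemma exists_zeta_le_inv_mul (θ₁ θ₂ : ℝ) {A B : ℕ} (hA : 0 < A) (hB : 0 < B) :
    ∃ m : ℤ × ℤ, m ≠ 0 ∧ |m.1| ≤ A ∧ |m.2| ≤ B ∧ zeta θ₁ θ₂ m ≤ ((A * B : ℕ) : ℝ)⁻¹ := by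
  set N : ℕ := A * B
  have hN : (0 : ℝ) < N := by positivity
  let u (x : ℕ × ℕ) : ℝ := θ₁ * x.1 + θ₂ * x.2
  let bucket (x : ℕ × ℕ) : ℤ := ⌊Int.fract (u x) * N⌋
  have hmaps : MapsTo bucket (Finset.range (A + 1) ×ˢ Finset.range (B + 1) : Finset _)
      (Finset.Ico (0 : ℤ) N : Finset ℤ) := by
    intro x _
    simp only [Finset.coe_Ico, mem_Ico, bucket, Int.floor_nonneg, Int.floor_lt]
    exact ⟨by have := Int.fract_nonneg (u x); positivity,
      by simpa using mul_lt_mul_of_pos_right (Int.fract_lt_one (u x)) hN⟩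
  have hcard :
      (Finset.Ico (0 : ℤ) N).card < (Finset.range (A + 1) ×ˢ Finset.range (B + 1)).card := by
    simp only [Int.card_Ico, sub_zero, Int.toNat_natCast, Finset.card_product,
      Finset.card_range, N]
    nlinarith
  obtain ⟨x, hx, y, hy, hxy, hbucket⟩ := Finset.exists_ne_map_eq_of_card_lt_of_maps_to hcard hmaps
  simp only [Finset.mem_product, Finset.mem_range] at hx hy
  refine ⟨((x.1 : ℤ) - y.1, (x.2 : ℤ) - y.2), ?_, ?_, ?_, ?_⟩
  · intro h
    simp only [Prod.ext_iff, Prod.fst_zero, Prod.snd_zero, sub_eq_zero, Nat.cast_inj] at h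
    exact hxy (Prod.ext h.1 h.2)
  · rw [abs_le]; constructor <;> omega
  · rw [abs_le]; constructor <;> omega
  · have hclose : |Int.fract (u x) * N - Int.fract (u y) * N| < 1 :=
      Int.abs_sub_lt_one_of_floor_eq_floor hbucket
    rw [← sub_mul, abs_mul, abs_of_pos hN, ← lt_div_iff₀ hN, one_div] at hclose
    calc zeta θ₁ θ₂ ((x.1 : ℤ) - y.1, (x.2 : ℤ) - y.2)
        ≤ |u x - u y - ((⌊u x⌋ - ⌊u y⌋ : ℤ) : ℝ)| := by
          rw [zeta]
          convert dni_le_abs_sub _ _ using 3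
          simp only [u]; push_cast; ring
      _ = |Int.fract (u x) - Int.fract (u y)| := by
          rw [Int.fract, Int.fract]; push_cast; ring_nf
      _ ≤ (N : ℝ)⁻¹ := hclose.le

noncomputable def box (l : ℕ) : Finset (ℤ × ℤ) :=
  (Finset.Icc (-16 ^ l) (16 ^ l) ×ˢ Finset.Icc (-4 ^ l) (4 ^ l)).erase 0

lemma mem_box {l : ℕ} {m : ℤ × ℤ} : m ∈ box l ↔ m ≠ 0 ∧ |m.1| ≤ 16 ^ l ∧ |m.2| ≤ 4 ^ l := by
  simp only [box, Finset.mem_erase, Finset.mem_product, Finset.mem_Icc, abs_le]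

lemma box_nonempty (l : ℕ) : (box l).Nonempty :=
  ⟨(1, 0), mem_box.2 ⟨by simp, by simp [one_le_pow₀], by simp⟩⟩

lemma box_subset_succ (l : ℕ) : box l ⊆ box (l + 1) := by
  intro m hm
  obtain ⟨hm0, h₁, h₂⟩ := mem_box.1 hm
  exact mem_box.2 ⟨hm0, h₁.trans (by gcongr <;> omega), h₂.trans (by gcongr <;> omega)⟩

lemma lt_abs_or_lt_abs_of_notMem_box {c : ℤ × ℤ} {l : ℕ} (hc : c ≠ 0) (h : c ∉ box l) :
    16 ^ l < |c.1| ∨ 4 ^ l < |c.2| := by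
  by_contra! h'
  exact h (mem_box.2 ⟨hc, h'⟩)

lemma exists_mem_box_zeta_le (θ₁ θ₂ : ℝ) (l : ℕ) :
    ∃ m ∈ box l, zeta θ₁ θ₂ m ≤ ((64 : ℝ) ^ l)⁻¹ := by
  obtain ⟨m, hm0, h₁, h₂, hζ⟩ :=
    exists_zeta_le_inv_mul θ₁ θ₂ (A := 16 ^ l) (B := 4 ^ l) (by positivity) (by positivity)
  refine ⟨m, mem_box.2 ⟨hm0, mod_cast h₁, mod_cast h₂⟩, hζ.trans_eq ?_⟩
  rw [← mul_pow]; norm_num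

noncomputable def boxArgmin (θ₁ θ₂ : ℝ) (l : ℕ) : ℤ × ℤ :=
  ((box l).exists_min_image (zeta θ₁ θ₂) (box_nonempty l)).choose

lemma boxArgmin_spec (θ₁ θ₂ : ℝ) (l : ℕ) :
    boxArgmin θ₁ θ₂ l ∈ box l ∧ ∀ m ∈ box l, zeta θ₁ θ₂ (boxArgmin θ₁ θ₂ l) ≤ zeta θ₁ θ₂ m :=
  ((box l).exists_min_image (zeta θ₁ θ₂) (box_nonempty l)).choose_spec

/-- Keeps the previous vector whenever it is still a minimiser, so that the sequence only
changes to a vector outside the previous box. -/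
noncomputable def approxSeq (θ₁ θ₂ : ℝ) : ℕ → ℤ × ℤ
  | 0 => boxArgmin θ₁ θ₂ 0
  | l + 1 =>
    if boxArgmin θ₁ θ₂ (l + 1) ∈ box l then approxSeq θ₁ θ₂ l else boxArgmin θ₁ θ₂ (l + 1)

lemma approxSeq_spec (θ₁ θ₂ : ℝ) (l : ℕ) :
    approxSeq θ₁ θ₂ l ∈ box l ∧
      ∀ m ∈ box l, zeta θ₁ θ₂ (approxSeq θ₁ θ₂ l) ≤ zeta θ₁ θ₂ m := by
  induction l with
  | zero => exact boxArgmin_spec θ₁ θ₂ 0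
  | succ l ih =>
    obtain ⟨hmem, hmin⟩ := boxArgmin_spec θ₁ θ₂ (l + 1)
    rw [approxSeq]
    split_ifs with h
    · exact ⟨box_subset_succ l ih.1, fun m hm => (ih.2 _ h).trans (hmin m hm)⟩
    · exact ⟨hmem, hmin⟩

lemma approxSeq_succ_notMem_box (θ₁ θ₂ : ℝ) {l : ℕ}
    (h : approxSeq θ₁ θ₂ (l + 1) ≠ approxSeq θ₁ θ₂ l) : approxSeq θ₁ θ₂ (l + 1) ∉ box l := by
  rw [approxSeq] at h ⊢
  split_ifs at h ⊢ with hbox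
  · exact absurd rfl h
  · exact hbox

lemma zeta_approxSeq_le (θ₁ θ₂ : ℝ) (l : ℕ) :
    zeta θ₁ θ₂ (approxSeq θ₁ θ₂ l) ≤ ((64 : ℝ) ^ l)⁻¹ := by
  obtain ⟨m, hm, hζ⟩ := exists_mem_box_zeta_le θ₁ θ₂ l
  exact ((approxSeq_spec θ₁ θ₂ l).2 m hm).trans hζ

lemma forall_le_dni_Icc_or {L V v δ : ℝ} (hgap : 2 * v + 2 * δ ≤ V) (hV : V + 2 * δ ≤ 1) :
    (∀ t ∈ Icc L (L + v), δ ≤ dni t) ∨ (∀ t ∈ Icc (L + V - v) (L + V), δ ≤ dni t) := by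
  refine or_iff_not_imp_left.2 fun h => ?_
  push Not at h
  obtain ⟨t₀, ⟨ht₀, ht₀'⟩, hδ₀⟩ := h
  obtain ⟨hn₀, hn₀'⟩ := abs_lt.1 hδ₀
  rintro t ⟨ht, ht'⟩
  refine le_dni_iff.2 fun n => ?_
  rcases le_or_gt n (round t₀) with hn | hn
  · have : (n : ℝ) ≤ round t₀ := mod_cast hn
    exact le_abs.2 (Or.inl (by linarith))
  · have : (round t₀ : ℝ) + 1 ≤ n := mod_cast hn
    exact le_abs.2 (Or.inr (by linarith))

lemma exists_Icc_subset_mul_mem_Icc (c a w w' : ℝ) (hw' : 0 ≤ w') (hw : w' ≤ w) :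
    let L := min (a * c) ((a + w) * c)
    ∃ lo hi : ℝ, Icc lo (lo + w') ⊆ Icc a (a + w) ∧ Icc hi (hi + w') ⊆ Icc a (a + w) ∧
      (∀ x ∈ Icc lo (lo + w'), x * c ∈ Icc L (L + |c| * w')) ∧
      ∀ x ∈ Icc hi (hi + w'), x * c ∈ Icc (L + |c| * w - |c| * w') (L + |c| * w) := by
  intro L
  have hlo : Icc a (a + w') ⊆ Icc a (a + w) := Icc_subset_Icc le_rfl (by linarith)
  have hhi : Icc (a + w - w') (a + w - w' + w') ⊆ Icc a (a + w) :=
    Icc_subset_Icc (by linarith) (by linarith)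
  rcases le_or_gt 0 c with hc | hc
  · have hL : L = a * c := min_eq_left (by nlinarith)
    refine ⟨a, a + w - w', hlo, hhi, ?_, ?_⟩ <;> rintro x ⟨hx, hx'⟩ <;>
      rw [hL, abs_of_nonneg hc] <;> constructor <;> nlinarith
  · have hL : L = (a + w) * c := min_eq_right (by nlinarith)
    refine ⟨a + w - w', a, hhi, hlo, ?_, ?_⟩ <;> rintro x ⟨hx, hx'⟩ <;>
      rw [hL, abs_of_neg hc] <;> constructor <;> nlinarith

lemma exists_Icc_subset_forall_le_dni {p s s' : ℝ × ℝ} {c₁ c₂ δ : ℝ} (hs' : 0 ≤ s')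
    (hs : s' ≤ s) (hgap : 2 * (|c₁| * s'.1 + |c₂| * s'.2) + 2 * δ ≤ |c₁| * s.1 + |c₂| * s.2)
    (hshort : |c₁| * s.1 + |c₂| * s.2 + 2 * δ ≤ 1) :
    ∃ p', Icc p' (p' + s') ⊆ Icc p (p + s) ∧
      ∀ z ∈ Icc p' (p' + s'), δ ≤ dni (z.1 * c₁ + z.2 * c₂) := by
  obtain ⟨lo₁, hi₁, hlo₁, hhi₁, hlo₁', hhi₁'⟩ :=
    exists_Icc_subset_mul_mem_Icc c₁ p.1 s.1 s'.1 hs'.1 hs.1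
  obtain ⟨lo₂, hi₂, hlo₂, hhi₂, hlo₂', hhi₂'⟩ :=
    exists_Icc_subset_mul_mem_Icc c₂ p.2 s.2 s'.2 hs'.2 hs.2
  simp only [Icc_prod_eq, Prod.fst_add, Prod.snd_add, mem_prod, Prod.forall]
  rcases forall_le_dni_Icc_or hgap hshort
    (L := min (p.1 * c₁) ((p.1 + s.1) * c₁) + min (p.2 * c₂) ((p.2 + s.2) * c₂)) with h | h
  · refine ⟨(lo₁, lo₂), prod_mono hlo₁ hlo₂, fun x y ⟨hx, hy⟩ => h _ ?_⟩
    obtain ⟨hx₁, hx₂⟩ := hlo₁' x hx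
    obtain ⟨hy₁, hy₂⟩ := hlo₂' y hy
    constructor <;> linarith
  · refine ⟨(hi₁, hi₂), prod_mono hhi₁ hhi₂, fun x y ⟨hx, hy⟩ => h _ ?_⟩
    obtain ⟨hx₁, hx₂⟩ := hhi₁' x hx
    obtain ⟨hy₁, hy₂⟩ := hhi₂' y hy
    constructor <;> linarith

noncomputable def cellSize (n : ℕ) : ℝ × ℝ := (((16 : ℝ) ^ n)⁻¹, ((4 : ℝ) ^ n)⁻¹)

def cell (n : ℕ) (p : ℝ × ℝ) : Set (ℝ × ℝ) := Icc p (p + cellSize n)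

lemma cellSize_nonneg (n : ℕ) : 0 ≤ cellSize n :=
  ⟨by simp [cellSize], by simp [cellSize]⟩

lemma cellSize_succ_le (n : ℕ) : cellSize (n + 1) ≤ cellSize n :=
  ⟨by simp only [cellSize]; gcongr <;> norm_num, by simp only [cellSize]; gcongr <;> norm_num⟩

lemma cell_succ_subset (n : ℕ) (p : ℝ × ℝ) : cell (n + 1) p ⊆ cell n p :=
  Icc_subset_Icc le_rfl (add_le_add_right (cellSize_succ_le n) p)

lemma cell_nonempty (n : ℕ) (p : ℝ × ℝ) : (cell n p).Nonempty :=
  nonempty_Icc.2 (le_add_of_nonneg_right (cellSize_nonneg n))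

/-- On a cell of level `n + 1` the linear form `z ↦ z.1 * c.1 + z.2 * c.2` varies by at most
`5 / 16` (from `h₁`, `h₂`) and by at least `1 / 256` (from `hnew`), which leaves room for a
subcell of level `n + 2` on which it stays `1 / 4096` away from `ℤ`. -/
lemma exists_cell_subset_forall_le_zeta (n : ℕ) (p : ℝ × ℝ) {c : ℤ × ℤ} (h₁ : |c.1| ≤ 16 ^ n)
    (h₂ : |c.2| ≤ 4 ^ n) (hnew : 16 ^ n ≤ 16 * |c.1| ∨ 4 ^ n ≤ 4 * |c.2|) :
    ∃ p', cell (n + 2) p' ⊆ cell (n + 1) p ∧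
      ∀ z ∈ cell (n + 2) p', (4096 : ℝ)⁻¹ ≤ zeta z.1 z.2 c := by
  set u := |(c.1 : ℝ)| / (16 : ℝ) ^ (n + 1)
  set v := |(c.2 : ℝ)| / (4 : ℝ) ^ (n + 1)
  have hu : |(c.1 : ℝ)| * ((16 : ℝ) ^ (n + 2))⁻¹ = u / 16 := by
    simp only [u, pow_succ]; field_simp
  have hv : |(c.2 : ℝ)| * ((4 : ℝ) ^ (n + 2))⁻¹ = v / 4 := by
    simp only [v, pow_succ]; field_simp
  have hu' : |(c.1 : ℝ)| * ((16 : ℝ) ^ (n + 1))⁻¹ = u := (div_eq_mul_inv _ _).symm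
  have hv' : |(c.2 : ℝ)| * ((4 : ℝ) ^ (n + 1))⁻¹ = v := (div_eq_mul_inv _ _).symm
  have h₁' : |(c.1 : ℝ)| ≤ 16 ^ n := by exact_mod_cast h₁
  have h₂' : |(c.2 : ℝ)| ≤ 4 ^ n := by exact_mod_cast h₂
  have hnew' : (16 : ℝ) ^ n ≤ 16 * |(c.1 : ℝ)| ∨ (4 : ℝ) ^ n ≤ 4 * |(c.2 : ℝ)| := by
    exact_mod_cast hnew
  have hu₀ : 0 ≤ u := by positivity
  have hv₀ : 0 ≤ v := by positivity
  have hu₁ : u ≤ 1 / 16 := by rw [div_le_iff₀ (by positivity), pow_succ]; linarith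
  have hv₁ : v ≤ 1 / 4 := by rw [div_le_iff₀ (by positivity), pow_succ]; linarith
  have hlarge : 1 / 256 ≤ u ∨ 1 / 16 ≤ v := by
    rw [le_div_iff₀ (by positivity), le_div_iff₀ (by positivity), pow_succ, pow_succ]
    rcases hnew' with h | h
    · left; linarith
    · right; linarith
  exact exists_Icc_subset_forall_le_dni (cellSize_nonneg (n + 2)) (cellSize_succ_le (n + 1))
    (by simp only [cellSize, hu, hv, hu', hv']; rcases hlarge with h | h <;> linarith)
    (by simp only [cellSize, hu', hv']; linarith)

theorem exists_forall_le_zeta (c : ℕ → ℤ × ℤ) (hc : ∀ l, c l ∈ box l)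
    (hnew : ∀ l, c (l + 1) ≠ c l → c (l + 1) ∉ box l) :
    ∃ η : ℝ × ℝ, ∀ l, (4096 : ℝ)⁻¹ ≤ zeta η.1 η.2 (c l) := by
  let Good (l : ℕ) (p : ℝ × ℝ) : Prop := ∀ z ∈ cell (l + 2) p, (4096 : ℝ)⁻¹ ≤ zeta z.1 z.2 (c l)
  have base : ∃ p, Good 0 p := by
    obtain ⟨hc₀, h₁, h₂⟩ := mem_box.1 (hc 0)
    have hnew₀ : 16 ^ 0 ≤ 16 * |(c 0).1| ∨ 4 ^ 0 ≤ 4 * |(c 0).2| := by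
      by_contra! h
      have := abs_nonneg (c 0).1
      have := abs_nonneg (c 0).2
      exact hc₀ (Prod.ext (abs_eq_zero.1 (by omega)) (abs_eq_zero.1 (by omega)))
    obtain ⟨p, -, hp⟩ := exists_cell_subset_forall_le_zeta 0 0 h₁ h₂ hnew₀
    exact ⟨p, hp⟩
  have step (l : ℕ) (p : ℝ × ℝ) (hp : Good l p) :
      ∃ p', cell (l + 3) p' ⊆ cell (l + 2) p ∧ Good (l + 1) p' := by
    by_cases hl : c (l + 1) = c l
    · exact ⟨p, cell_succ_subset _ p, fun z hz => hl ▸ hp z (cell_succ_subset _ p hz)⟩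
    obtain ⟨hc₀, h₁, h₂⟩ := mem_box.1 (hc (l + 1))
    have hnew' : 16 ^ (l + 1) ≤ 16 * |(c (l + 1)).1| ∨ 4 ^ (l + 1) ≤ 4 * |(c (l + 1)).2| := by
      rw [pow_succ, pow_succ]
      rcases lt_abs_or_lt_abs_of_notMem_box hc₀ (hnew l hl) with h | h
      · left; linarith
      · right; linarith
    exact exists_cell_subset_forall_le_zeta (l + 1) p h₁ h₂ hnew'
  obtain ⟨p₀, hp₀⟩ := base
  choose! next hnext using step
  let p (l : ℕ) : ℝ × ℝ := Nat.rec p₀ next l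
  have hgood (l : ℕ) : Good l (p l) := Nat.rec hp₀ (fun l ih => (hnext l _ ih).2) l
  obtain ⟨η, hη⟩ := IsCompact.nonempty_iInter_of_sequence_nonempty_isCompact_isClosed
    (fun l => cell (l + 2) (p l)) (fun l => (hnext l _ (hgood l)).1)
    (fun _ => cell_nonempty _ _) isCompact_Icc (fun _ => isClosed_Icc)
  exact ⟨η, fun l => hgood l η (mem_iInter.1 hη l)⟩

lemma exists_lt_pow_le_mul {b x : ℝ} (hb : 1 < b) (hx : 1 ≤ x) :
    ∃ k : ℕ, x < b ^ k ∧ b ^ k ≤ b * x := by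
  obtain ⟨n, hn, hn'⟩ := exists_nat_pow_near hx hb
  exact ⟨n + 1, hn', by rw [pow_succ']; gcongr⟩

lemma pow_le_mul_rpow_of_pow_three_le {y t K : ℝ} (hy : 0 ≤ y) (ht : 0 ≤ t) (hK : 1 ≤ K)
    {n : ℕ} (hn : n ≤ 3) (h : y ^ 3 ≤ K * t) : y ^ n ≤ K * t ^ ((n : ℝ) / 3) := by
  have hyn : (y ^ 3) ^ ((n : ℝ) / 3) = y ^ n := by
    rw [← Real.rpow_natCast_mul hy, Nat.cast_ofNat, mul_div_cancel₀ _ three_ne_zero,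
      Real.rpow_natCast]
  have hn' : (n : ℝ) / 3 ≤ 1 := by rw [div_le_one₀ (by norm_num)]; exact_mod_cast hn
  calc y ^ n = (y ^ 3) ^ ((n : ℝ) / 3) := hyn.symm
    _ ≤ (K * t) ^ ((n : ℝ) / 3) := Real.rpow_le_rpow (by positivity) h (by positivity)
    _ = K ^ ((n : ℝ) / 3) * t ^ ((n : ℝ) / 3) := Real.mul_rpow (by linarith) ht
    _ ≤ K * t ^ ((n : ℝ) / 3) := by
      gcongr
      simpa using Real.rpow_le_rpow_of_exponent_le hK hn'

lemma exists_pow_bounds_of_one_le {δ q : ℝ} (hδ : 0 < δ) (hδ' : δ ≤ 1 / 2) (hq : 1 ≤ q) :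
    ∃ k : ℕ, q * ((64 : ℝ) ^ k)⁻¹ ≤ δ / 2 ∧ (16 : ℝ) ^ k ≤ 128 / δ * q ^ ((2 : ℝ) / 3) ∧
      (4 : ℝ) ^ k ≤ 128 / δ * q ^ ((1 : ℝ) / 3) := by
  obtain ⟨k, hk, hk'⟩ := exists_lt_pow_le_mul (by norm_num : (1 : ℝ) < 64)
    (show 1 ≤ 2 * q / δ by rw [le_div_iff₀ hδ]; linarith)
  have hK : 1 ≤ 128 / δ := by rw [le_div_iff₀ hδ]; linarith
  have hcube : ((4 : ℝ) ^ k) ^ 3 ≤ 128 / δ * q := by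
    calc ((4 : ℝ) ^ k) ^ 3 = 64 ^ k := by rw [← pow_mul, mul_comm, pow_mul]; norm_num
      _ ≤ 64 * (2 * q / δ) := hk'
      _ = 128 / δ * q := by ring
  refine ⟨k, ?_, ?_, ?_⟩
  · rw [mul_inv_le_iff₀ (by positivity)]
    rw [div_lt_iff₀ hδ] at hk
    linarith
  · simpa [← pow_mul, show (4 : ℝ) ^ (k * 2) = 16 ^ k by rw [pow_mul']; norm_num] using
      pow_le_mul_rpow_of_pow_three_le (by positivity) (by linarith) hK (n := 2) (by norm_num) hcube
  · simpa using
      pow_le_mul_rpow_of_pow_three_le (by positivity) (by linarith) hK (n := 1) (by norm_num) hcube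

theorem badt_of_forall_le_zeta {θ₁ θ₂ η₁ η₂ δ : ℝ} (hδ : 0 < δ) (m : ℕ → ℤ × ℤ)
    (hm : ∀ k, |((m k).1 : ℝ)| ≤ 16 ^ k ∧ |((m k).2 : ℝ)| ≤ 4 ^ k)
    (hθ : ∀ k, zeta θ₁ θ₂ (m k) ≤ ((64 : ℝ) ^ k)⁻¹) (hη : ∀ k, δ ≤ zeta η₁ η₂ (m k)) :
    BADT θ₁ θ₂ η₁ η₂ := by
  refine ⟨δ / (4 * (128 / δ)), by positivity, fun q hq => ?_⟩
  set A₁ := dni (q * θ₁ - η₁)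
  set A₂ := dni (q * θ₂ - η₂)
  obtain ⟨k, hsmall, h₁, h₂⟩ := exists_pow_bounds_of_one_le hδ ((hη 0).trans (dni_le_half _))
    (show (1 : ℝ) ≤ q by exact_mod_cast hq)
  have hA₁ : 0 ≤ A₁ := abs_nonneg _
  have hA₂ : 0 ≤ A₂ := abs_nonneg _
  have key : δ / 2 ≤ 16 ^ k * A₁ + 4 ^ k * A₂ := by
    have := (hη k).trans (zeta_le_transfer θ₁ θ₂ η₁ η₂ q (m k))
    have := mul_le_mul_of_nonneg_left (hθ k) (Nat.cast_nonneg q)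
    have := mul_le_mul_of_nonneg_right (hm k).1 hA₁
    have := mul_le_mul_of_nonneg_right (hm k).2 hA₂
    linarith
  have hmax₁ := le_max_left ((q : ℝ) ^ ((2 : ℝ) / 3) * A₁) ((q : ℝ) ^ ((1 : ℝ) / 3) * A₂)
  have hmax₂ := le_max_right ((q : ℝ) ^ ((2 : ℝ) / 3) * A₁) ((q : ℝ) ^ ((1 : ℝ) / 3) * A₂)
  rw [div_le_iff₀ (by positivity)]
  nlinarith [mul_le_mul_of_nonneg_right h₁ hA₁, mul_le_mul_of_nonneg_right h₂ hA₂,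
    (by positivity : (0 : ℝ) < 128 / δ)]

/-- For any `Θ = (θ₁, θ₂)`, `BAD^Θ(2/3,1/3)` is non-empty. -/
theorem stmt_0 (θ₁ θ₂ : ℝ) : ∃ η₁ η₂ : ℝ, BADT θ₁ θ₂ η₁ η₂ := by
  obtain ⟨η, hη⟩ := exists_forall_le_zeta (approxSeq θ₁ θ₂)
    (fun l => (approxSeq_spec θ₁ θ₂ l).1) (fun _ => approxSeq_succ_notMem_box θ₁ θ₂)
  refine ⟨η.1, η.2, badt_of_forall_le_zeta (by norm_num) (approxSeq θ₁ θ₂) (fun k => ?_)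
    (zeta_approxSeq_le θ₁ θ₂) hη⟩
  obtain ⟨-, h₁, h₂⟩ := mem_box.1 (approxSeq_spec θ₁ θ₂ k).1
  exact ⟨by exact_mod_cast h₁, by exact_mod_cast h₂⟩
end

section
/- Let 1, θ₁, θ₂ be linearly independent over ℚ and (m_ν) the sequence of best approximation vectors with M_ν = √(max(|m_{ν,1}|, |m_{ν,2}|²)) strictly increasing. Then for every ν, M_{ν+28} ≥ 2·M_ν. -/
open scoped BigOperators

/-!
If `M_{ν+28} < 2 M_ν`, put `W = M_ν²`. The 58 lifted vectors `±(m_{μ,0}, m_μ)`, `ν ≤ μ ≤ ν + 28`,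
lie in the annulus `W ≤ max(|x₁|, |x₂|²) < 4W`, and the linear form is at most `ζ_ν` on them
because `ζ` decreases along the sequence. The annulus is covered by `2 × 28` boxes in each of which
two integer points differ by a vector of weighted size `< W` and form value `≤ ζ_ν`. By pigeonhole
two of the 58 points share a box, and their nonzero difference contradicts the minimality of `m_ν`.
-/

def iwsize (x : ℤ × ℤ) : ℕ := max x.1.natAbs (x.2.natAbs ^ 2)

def linForm (θ₁ θ₂ : ℝ) (x : ℤ × ℤ × ℤ) : ℝ := x.1 + θ₁ * x.2.1 + θ₂ * x.2.2

lemma wsize_eq_iwsize (x : ℤ × ℤ) : wsize x = iwsize x := by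
  simp [wsize, iwsize, Nat.cast_natAbs, sq_abs]

lemma iwsize_neg (x : ℤ × ℤ) : iwsize (-x) = iwsize x := by
  simp [iwsize]

lemma linForm_sub (θ₁ θ₂ : ℝ) (x y : ℤ × ℤ × ℤ) :
    linForm θ₁ θ₂ (x - y) = linForm θ₁ θ₂ x - linForm θ₁ θ₂ y := by
  simp only [linForm, Prod.fst_sub, Prod.snd_sub, Int.cast_sub]; ring

lemma linForm_neg (θ₁ θ₂ : ℝ) (x : ℤ × ℤ × ℤ) :
    linForm θ₁ θ₂ (-x) = -linForm θ₁ θ₂ x := by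
  simp only [linForm, Prod.fst_neg, Prod.snd_neg, Int.cast_neg]; ring

lemma Int.natAbs_sub_lt_of_natAbs_div_eq {L : ℕ} (hL : 0 < L) {a b : ℤ}
    (hsign : a < 0 ↔ b < 0) (hdiv : a.natAbs / L = b.natAbs / L) : (a - b).natAbs < L := by
  have ha := Nat.div_add_mod a.natAbs L
  have hb := Nat.div_add_mod b.natAbs L
  have ha' := Nat.mod_lt a.natAbs hL
  have hb' := Nat.mod_lt b.natAbs hL
  rw [hdiv] at ha
  omega

lemma abs_sub_le_of_pos_iff {s t ζ : ℝ} (hpos : 0 < s ↔ 0 < t) (hs : |s| ≤ ζ) (ht : |t| ≤ ζ) :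
    |s - t| ≤ ζ := by
  rw [abs_le] at *
  by_cases h : 0 < s
  · have := hpos.1 h; constructor <;> linarith
  · have := mt hpos.2 h; constructor <;> linarith

namespace IsBestApprox

variable {θ₁ θ₂ : ℝ} {m m' : ℤ × ℤ}

lemma exists_abs_linForm_eq (hm : IsBestApprox θ₁ θ₂ m) :
    ∃ m₀ : ℤ, |linForm θ₁ θ₂ (m₀, m)| = zeta θ₁ θ₂ m :=
  let ⟨m₀, h, _⟩ := hm.2; ⟨m₀, h⟩

lemma eq_zero_of_iwsize_lt (hm : IsBestApprox θ₁ θ₂ m) {x : ℤ × ℤ × ℤ}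
    (hsize : iwsize x.2 < iwsize m) (hx : |linForm θ₁ θ₂ x| ≤ zeta θ₁ θ₂ m) : x = 0 := by
  obtain ⟨-, m₀, -, hbest⟩ := hm
  obtain ⟨x₀, x₁, x₂⟩ := x
  have hle : wsize (x₁, x₂) ≤ wsize m := by
    rw [wsize_eq_iwsize, wsize_eq_iwsize]; exact_mod_cast hsize.le
  rcases hbest x₀ x₁ x₂ hle hx with h | h | h
  · simpa using h
  all_goals
    simp only [Prod.mk.injEq] at h
    obtain ⟨-, rfl, rfl⟩ := h
    simp [iwsize] at hsize

lemma zeta_lt_of_iwsize_lt (hm : IsBestApprox θ₁ θ₂ m) (hm' : IsBestApprox θ₁ θ₂ m')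
    (h : iwsize m < iwsize m') : zeta θ₁ θ₂ m' < zeta θ₁ θ₂ m := by
  obtain ⟨m₀, hm₀⟩ := hm.exists_abs_linForm_eq
  by_contra! hle
  have := hm'.eq_zero_of_iwsize_lt (x := (m₀, m)) h (hm₀.trans_le hle)
  exact hm.1 (congrArg Prod.snd this)

end IsBestApprox

lemma Nat.lt_sqrt_sub_one_add_one_iff {W n : ℕ} (hW : 0 < W) :
    n < Nat.sqrt (W - 1) + 1 ↔ n ^ 2 < W := by
  rw [Nat.lt_succ_iff, Nat.le_sqrt']; omega

open Finset in
lemma exists_ne_iwsize_sub_lt {ι : Type*} [Fintype ι] (hcard : 56 < Fintype.card ι)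
    {W : ℕ} {ζ : ℝ} (p : ι → ℤ × ℤ) (t : ι → ℝ) (hlow : ∀ i, W ≤ iwsize (p i))
    (hup : ∀ i, iwsize (p i) < 4 * W) (ht : ∀ i, |t i| ≤ ζ) :
    ∃ i j, i ≠ j ∧ iwsize (p i - p j) < W ∧ |t i - t j| ≤ ζ := by
  classical
  have hW : 0 < W := by
    obtain ⟨i⟩ : Nonempty ι := Fintype.card_pos_iff.1 (by omega)
    have := hup i; omega
  set L := Nat.sqrt (W - 1) + 1
  have hL : ∀ n, n < L ↔ n ^ 2 < W := fun n => Nat.lt_sqrt_sub_one_add_one_iff hW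
  -- A box fixes the signs of `x₁`, `x₂`, `t` and the quotients `|x₁| / W < 4`, `|x₂| / L < 2`,
  -- where `L = ⌈√W⌉`; the 8 boxes with both quotients `0` lie inside `max(|x₁|, |x₂|²) < W`.
  let box : ι → (Bool × ℕ) × (Bool × ℕ) × Bool := fun i =>
    ((decide ((p i).1 < 0), (p i).1.natAbs / W), (decide ((p i).2 < 0), (p i).2.natAbs / L),
      decide (0 < t i))
  let boxes : Finset ((Bool × ℕ) × (Bool × ℕ) × Bool) :=
    ((univ ×ˢ range 4) ×ˢ (univ ×ˢ range 2) ×ˢ univ).filter fun c => ¬(c.1.2 = 0 ∧ c.2.1.2 = 0)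
  have hboxes : boxes.card = 56 := by decide
  have hmaps : Set.MapsTo box (univ : Finset ι) boxes := by
    intro i _
    have h₁ : (p i).1.natAbs < 4 * W := (le_max_left _ _).trans_lt (hup i)
    have h₂ : (p i).2.natAbs ^ 2 < 4 * W := (le_max_right _ _).trans_lt (hup i)
    have h₂' : (p i).2.natAbs < 2 * L := by
      have := (hL L).not.1 (lt_irrefl L)
      nlinarith
    simp only [boxes, box, coe_filter, mem_product, mem_univ, mem_range, true_and,
      Set.mem_ofPred_eq, Nat.div_eq_zero_iff, not_and, not_or]
    refine ⟨⟨Nat.div_lt_of_lt_mul (by omega), Nat.div_lt_of_lt_mul (by omega), trivial⟩,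
      fun h => ⟨by omega, fun h' => (hlow i).not_gt (max_lt (by omega) ((hL _).1 h'))⟩⟩
  obtain ⟨i, -, j, -, hij, hbox⟩ :=
    exists_ne_map_eq_of_card_lt_of_maps_to (by simpa [hboxes] using hcard) hmaps
  simp only [box, Prod.mk.injEq, decide_eq_decide] at hbox
  obtain ⟨⟨hs₁, hd₁⟩, ⟨hs₂, hd₂⟩, hst⟩ := hbox
  refine ⟨i, j, hij, max_lt ?_ ?_, abs_sub_le_of_pos_iff hst (ht i) (ht j)⟩
  · exact Int.natAbs_sub_lt_of_natAbs_div_eq hW hs₁ hd₁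
  · exact (hL _).1 (Int.natAbs_sub_lt_of_natAbs_div_eq (Nat.succ_pos _) hs₂ hd₂)

lemma two_mul_Mval_le_of_four_mul_iwsize_le {x y : ℤ × ℤ} (h : 4 * iwsize x ≤ iwsize y) :
    2 * Mval x ≤ Mval y := by
  rw [Mval, Mval, wsize_eq_iwsize, wsize_eq_iwsize, Real.le_sqrt (by positivity) (by positivity),
    mul_pow, Real.sq_sqrt (by positivity)]
  exact_mod_cast (by linarith : 2 ^ 2 * iwsize x ≤ iwsize y)

namespace IsBestApproxSeq

variable {θ₁ θ₂ : ℝ} {m : ℕ → ℤ × ℤ}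

lemma strictMono_iwsize (hm : IsBestApproxSeq θ₁ θ₂ m) : StrictMono fun ν => iwsize (m ν) := by
  intro a b hab
  have := hm.2.1 hab
  simp only [Mval, wsize_eq_iwsize] at this
  exact_mod_cast (Real.sqrt_lt_sqrt_iff (by positivity)).1 this

lemma strictAnti_zeta (hm : IsBestApproxSeq θ₁ θ₂ m) : StrictAnti fun ν => zeta θ₁ θ₂ (m ν) :=
  fun _ _ hab => (hm.1 _).zeta_lt_of_iwsize_lt (hm.1 _) (hm.strictMono_iwsize hab)

lemma exists_signed_lifts (hm : IsBestApproxSeq θ₁ θ₂ m) (ν n : ℕ) :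
    ∃ v : Fin n × Bool → ℤ × ℤ × ℤ, Function.Injective v ∧
      (∀ k, iwsize (v k).2 = iwsize (m (ν + k.1))) ∧
      ∀ k, |linForm θ₁ θ₂ (v k)| = zeta θ₁ θ₂ (m (ν + k.1)) := by
  choose m₀ hm₀ using fun μ => (hm.1 μ).exists_abs_linForm_eq
  let v : Fin n × Bool → ℤ × ℤ × ℤ := fun k =>
    if k.2 then (m₀ (ν + k.1), m (ν + k.1)) else -(m₀ (ν + k.1), m (ν + k.1))
  have hv_size (k) : iwsize (v k).2 = iwsize (m (ν + k.1)) := by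
    rcases k with ⟨k, _ | _⟩ <;> simp [v, iwsize_neg]
  refine ⟨v, ?_, hv_size, fun k => ?_⟩
  · rintro ⟨k, b⟩ ⟨l, c⟩ hkl
    have hsize_eq := congrArg (fun x => iwsize x.2) hkl
    simp only [hv_size] at hsize_eq
    obtain rfl : k = l := Fin.ext (by simpa using hm.strictMono_iwsize.injective hsize_eq)
    rcases b <;> rcases c <;> simp only [v, Bool.false_eq_true, ↓reduceIte, Prod.ext_iff,
      Prod.fst_neg, Prod.snd_neg] at hkl ⊢ <;>
      exact ((hm.1 (ν + k)).1 (Prod.ext (by rw [Prod.fst_zero]; omega)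
        (by rw [Prod.snd_zero]; omega))).elim
  · rcases k with ⟨k, _ | _⟩ <;>
      simp only [v, Bool.false_eq_true, ↓reduceIte, linForm_neg, abs_neg, hm₀]

end IsBestApproxSeq

theorem stmt_4_general (θ₁ θ₂ : ℝ) (m : ℕ → ℤ × ℤ)
    (hm : IsBestApproxSeq θ₁ θ₂ m) (ν : ℕ) :
    2 * Mval (m ν) ≤ Mval (m (ν + 28)) := by
  apply two_mul_Mval_le_of_four_mul_iwsize_le
  by_contra! hlt
  have hsize := hm.strictMono_iwsize
  obtain ⟨v, hv_inj, hv_size, hv_form⟩ := hm.exists_signed_lifts ν 29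
  obtain ⟨k, l, hkl, hsmall, hform⟩ := exists_ne_iwsize_sub_lt (W := iwsize (m ν))
    (ζ := zeta θ₁ θ₂ (m ν)) (by simp) (fun k => (v k).2) (fun k => linForm θ₁ θ₂ (v k))
    (fun k => hv_size k ▸ hsize.monotone (by omega))
    (fun k => hv_size k ▸ (hsize.monotone (by omega)).trans_lt hlt)
    (fun k => hv_form k ▸ hm.strictAnti_zeta.antitone (by omega))
  rw [← linForm_sub] at hform
  exact hkl (hv_inj (sub_eq_zero.1 ((hm.1 ν).eq_zero_of_iwsize_lt hsmall hform)))

/-- `M_{ν+28} ≥ 2 M_ν`. -/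
theorem stmt_4 (θ₁ θ₂ : ℝ) (h : LinIndep θ₁ θ₂) (m : ℕ → ℤ × ℤ)
    (hm : IsBestApproxSeq θ₁ θ₂ m) (ν : ℕ) :
    2 * Mval (m ν) ≤ Mval (m (ν + 28)) :=
  stmt_4_general θ₁ θ₂ m hm ν
end

section
/- The set difference D = {(x₀,x₁,x₂) ∈ ℝ³ : max(|x₁|, |x₂|²) ≤ 4M², |x₀ + θ₁x₁ + θ₂x₂| ≤ ζ} \ {(x₀,x₁,x₂) : max(|x₁|, |x₂|²) ≤ M², |x₀ + θ₁x₁ + θ₂x₂| ≤ ζ} can be covered by 56 translates of boxes of the form {(x₀,x₁,x₂) : max(2|x₁ − ξ₁|, 4|x₂ − ξ₂|²) ≤ M², |x₀ + θ₁x₁ + θ₂x₂ − ξ₀| ≤ ζ/2}, for any M > 0, ζ > 0, and θ₁, θ₂ ∈ ℝ. -/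
open scoped BigOperators

/-!
Cut `[-4M², 4M²]` into 8 intervals of length `M²`, `[-2M, 2M]` into 4 intervals of length `M`,
and the range `[-ζ, ζ]` of the linear form into 2 intervals of length `ζ`. In the coordinates
`(x₀ + θ₁x₁ + θ₂x₂, x₁, x₂)` each of the resulting 64 cells lies in a translated box. A point of
the annulus has `|x₁| > M²` or `|x₂| > M`, so it avoids the 2 · 2 · 2 = 8 cells adjacent to
`x₁ = x₂ = 0`, and the remaining 56 cells cover it.
-/

/-- The `j`-th of the `2k` intervals of length `h` tiling `[-k h, k h]` is centred here. -/
noncomputable def cellCenter (h : ℝ) (k j : ℕ) : ℝ := (2 * j + 1 - 2 * k) * h / 2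

lemma exists_nat_lt_mem_Icc_add_one {t : ℝ} {n : ℕ} (hn : 0 < n) (ht₀ : 0 ≤ t) (htn : t ≤ n) :
    ∃ j < n, (j : ℝ) ≤ t ∧ t ≤ j + 1 := by
  rcases htn.lt_or_eq with htn | rfl
  · exact ⟨⌊t⌋₊, (Nat.floor_lt ht₀).mpr htn, Nat.floor_le ht₀, (Nat.lt_floor_add_one t).le⟩
  · refine ⟨n - 1, Nat.sub_lt hn one_pos, ?_, ?_⟩ <;> rw [Nat.cast_pred hn] <;> linarith

lemma exists_abs_sub_cellCenter_le {h x : ℝ} {k : ℕ} (hh : 0 < h) (hk : 0 < k)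
    (hx : |x| ≤ k * h) : ∃ j < 2 * k, |x - cellCenter h k j| ≤ h / 2 := by
  obtain ⟨hx₁, hx₂⟩ := abs_le.mp hx
  obtain ⟨j, hj, hjt, htj⟩ := exists_nat_lt_mem_Icc_add_one (t := x / h + k) (n := 2 * k) (by omega)
    (by rw [← neg_le_iff_add_nonneg, le_div_iff₀ hh]; linarith)
    (by push_cast; rw [two_mul, add_le_add_iff_right, div_le_iff₀ hh]; exact hx₂)
  refine ⟨j, hj, abs_le.mpr ⟨?_, ?_⟩⟩
  · have : (j - k : ℝ) * h ≤ x := by rw [← le_div_iff₀ hh]; linarith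
    unfold cellCenter; linarith
  · have : x ≤ (j + 1 - k : ℝ) * h := by rw [← div_le_iff₀ hh]; linarith
    unfold cellCenter; linarith

lemma abs_le_of_abs_sub_cellCenter_le {h x : ℝ} {k j : ℕ} (hh : 0 ≤ h)
    (hx : |x - cellCenter h k j| ≤ h / 2) (hj₁ : k ≤ j + 1) (hj₂ : j ≤ k) : |x| ≤ h := by
  have hc : |cellCenter h k j| ≤ h / 2 := by
    have hj₁ : (k : ℝ) ≤ j + 1 := by exact_mod_cast hj₁
    have hj₂ : (j : ℝ) ≤ k := by exact_mod_cast hj₂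
    unfold cellCenter
    rw [abs_le]
    constructor <;> nlinarith
  linarith [abs_sub_abs_le_abs_sub x (cellCenter h k j)]

/-- `(s, a, b)` indexes cell `s` of the linear form, cell `a` of `x₁` and cell `b` of `x₂`;
the cells that are middle ones in both `x₁` and `x₂` are excluded. -/
abbrev AnnulusCell : Type :=
  {c : Fin 2 × Fin 8 × Fin 4 //
    ¬((4 ≤ c.2.1.val + 1 ∧ c.2.1.val ≤ 4) ∧ (2 ≤ c.2.2.val + 1 ∧ c.2.2.val ≤ 2))}

lemma card_annulusCell : Fintype.card AnnulusCell = 56 := by decide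

noncomputable def AnnulusCell.center (ζ M : ℝ) (c : AnnulusCell) : ℝ × ℝ × ℝ :=
  (cellCenter ζ 1 c.1.1, cellCenter (M ^ 2) 4 c.1.2.1, cellCenter M 2 c.1.2.2)

lemma exists_annulusCell {ζ M y₀ y₁ y₂ : ℝ} (hζ : 0 < ζ) (hM : 0 < M) (h₀ : |y₀| ≤ ζ)
    (hout : max |y₁| (y₂ ^ 2) ≤ 4 * M ^ 2) (hin : M ^ 2 < max |y₁| (y₂ ^ 2)) :
    ∃ c : AnnulusCell, |y₀ - (c.center ζ M).1| ≤ ζ / 2 ∧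
      |y₁ - (c.center ζ M).2.1| ≤ M ^ 2 / 2 ∧ |y₂ - (c.center ζ M).2.2| ≤ M / 2 := by
  obtain ⟨hy₁, hy₂⟩ := max_le_iff.mp hout
  have hy₂ : |y₂| ≤ 2 * M := abs_le_of_sq_le_sq (by linarith) (by positivity)
  obtain ⟨s, hs, hs'⟩ := exists_abs_sub_cellCenter_le (k := 1) hζ one_pos (by simpa using h₀)
  obtain ⟨a, ha, ha'⟩ :=
    exists_abs_sub_cellCenter_le (h := M ^ 2) (k := 4) (by positivity) (by norm_num)
      (by push_cast; exact hy₁)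
  obtain ⟨b, hb, hb'⟩ := exists_abs_sub_cellCenter_le (k := 2) hM two_pos (by push_cast; exact hy₂)
  refine ⟨⟨(⟨s, hs⟩, ⟨a, ha⟩, ⟨b, hb⟩), ?_⟩, hs', ha', hb'⟩
  rintro ⟨⟨ha₁, ha₂⟩, hb₁, hb₂⟩
  have hy₁ := abs_le_of_abs_sub_cellCenter_le (by positivity) ha' ha₁ ha₂
  have hy₂ := abs_le_of_abs_sub_cellCenter_le hM.le hb' hb₁ hb₂
  exact hin.not_ge (max_le hy₁ (sq_le_sq.mpr (by rwa [abs_of_pos hM])))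

/-- the annular region can be covered by 56 translated shrunk
boxes. -/
theorem stmt_5 (θ₁ θ₂ M ζ : ℝ) (hM : 0 < M) (hζ : 0 < ζ) :
    ∃ ξ : Fin 56 → ℝ × ℝ × ℝ,
      ∀ x₀ x₁ x₂ : ℝ,
        (max |x₁| (x₂ ^ 2) ≤ 4 * M ^ 2 ∧ |x₀ + θ₁ * x₁ + θ₂ * x₂| ≤ ζ) →
        ¬(max |x₁| (x₂ ^ 2) ≤ M ^ 2 ∧ |x₀ + θ₁ * x₁ + θ₂ * x₂| ≤ ζ) →
        ∃ i : Fin 56,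
          max (2 * |x₁ - (ξ i).2.1|) (4 * (x₂ - (ξ i).2.2) ^ 2) ≤ M ^ 2 ∧
          |x₀ + θ₁ * x₁ + θ₂ * x₂ - (ξ i).1| ≤ ζ / 2 := by
  let e := Fintype.equivFinOfCardEq card_annulusCell
  refine ⟨fun i => (e.symm i).center ζ M, fun x₀ x₁ x₂ ⟨hout, hL⟩ hnot => ?_⟩
  have hin : M ^ 2 < max |x₁| (x₂ ^ 2) := lt_of_not_ge fun h => hnot ⟨h, hL⟩
  obtain ⟨c, hc₀, hc₁, hc₂⟩ := exists_annulusCell hζ hM hL hout hin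
  refine ⟨e c, ?_, by simpa using hc₀⟩
  simp only [Equiv.symm_apply_apply]
  refine max_le (by linarith) ?_
  have h := sq_le_sq' (neg_le_of_abs_le hc₂) (le_of_abs_le hc₂)
  linarith
end

section
/- Let m = (m₁, m₂) ∈ ℤ² with |m₂|² ≥ |m₁| and R^n ≤ |m₂| ≤ R^{n+1} for integers R ≥ 2, n ≥ 1. Let ε = δ/R and δ = 1/R³. Let B = [b₁, b₁ + δ/R^{2n}] × [b₂, b₂ + δ/R^n] be partitioned into R³ congruent subrectangles of dimensions (δ/R^{2(n+1)}) × (δ/R^{n+1}) as a grid (R² subdivisions in the first coordinate, R in the second). Then for R sufficiently large, the number of subrectangles B' containing a point (ξ₁, ξ₂) with ‖ξ₁m₁ + ξ₂m₂‖ < ε is at most 6R². -/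
/-!
Two points of one column of the grid differ by at most `δ / R ^ (2n+2)` in `ξ₁` and `δ / R ^ n`
in `ξ₂`, so the linear form `ξ₁ m₁ + ξ₂ m₂` changes by at most `δ + δ R < 1 - 2ε` between them
and both points lie in the same strip `|ξ₁ m₁ + ξ₂ m₂ - c| < ε`. Inside a column this strip has
vertical extent below `3 δ / R ^ (n+1)`, three cell heights (`2ε / |m₂|` from its width, one
more from its slope), so it meets at most four cells of each of the `R²` columns.
-/

open scoped BigOperators

lemma abs_sub_lt_of_dni_lt {x y ε : ℝ} (hx : dni x < ε) (hy : dni y < ε)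
    (hxy : |x - y| < 1 - 2 * ε) : |x - y| < 2 * ε := by
  unfold dni at hx hy
  have hround : round x = round y := by
    have hlt : |((round x - round y : ℤ) : ℝ)| < 1 := by
      calc |((round x - round y : ℤ) : ℝ)| = |-(x - round x) + (x - y) + (y - round y)| := by
            push_cast; ring_nf
        _ ≤ |x - round x| + |x - y| + |y - round y| := by
            simpa only [abs_neg] using abs_add_three (-(x - round x)) (x - y) (y - round y)
        _ < 1 := by linarith
    exact sub_eq_zero.mp (Int.abs_lt_one_iff.mp (by exact_mod_cast hlt))
  calc |x - y| = |(x - round x) - (y - round y)| := by rw [hround]; ring_nf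
    _ ≤ |x - round x| + |y - round y| := abs_sub _ _
    _ < 2 * ε := by linarith

lemma abs_sub_mul_lt_of_dni_lt {m₁ m₂ ξ₁ ξ₂ η₁ η₂ ε : ℝ}
    (hξ : dni (ξ₁ * m₁ + ξ₂ * m₂) < ε) (hη : dni (η₁ * m₁ + η₂ * m₂) < ε)
    (hclose : |ξ₁ - η₁| * |m₁| + |ξ₂ - η₂| * |m₂| < 1 - 2 * ε) :
    |ξ₂ - η₂| * |m₂| < 2 * ε + |ξ₁ - η₁| * |m₁| := by
  have hdiff : ξ₁ * m₁ + ξ₂ * m₂ - (η₁ * m₁ + η₂ * m₂) = (ξ₁ - η₁) * m₁ + (ξ₂ - η₂) * m₂ := by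
    ring
  have hsmall := abs_sub_lt_of_dni_lt hξ hη <| by
    rw [hdiff]
    exact (abs_add_le _ _).trans_lt (by simpa only [abs_mul] using hclose)
  rw [hdiff] at hsmall
  calc |ξ₂ - η₂| * |m₂| = |((ξ₁ - η₁) * m₁ + (ξ₂ - η₂) * m₂) - (ξ₁ - η₁) * m₁| := by
        rw [← abs_mul]; ring_nf
    _ ≤ |(ξ₁ - η₁) * m₁ + (ξ₂ - η₂) * m₂| + |(ξ₁ - η₁) * m₁| := abs_sub _ _
    _ < 2 * ε + |ξ₁ - η₁| * |m₁| := by rw [abs_mul]; linarith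

lemma abs_sub_lt_three_div_of_dni_lt {R δ : ℝ} {n : ℕ} (hR : 0 < R) (hδ : 0 < δ)
    (hδR : δ + δ * R < 1 - 2 * (δ / R)) {m₁ m₂ : ℝ} (hm₁ : |m₁| ≤ m₂ ^ 2)
    (hm₂l : R ^ n ≤ |m₂|) (hm₂u : |m₂| ≤ R ^ (n + 1)) {ξ₁ ξ₂ η₁ η₂ : ℝ}
    (h₁ : |ξ₁ - η₁| ≤ δ / R ^ (2 * (n + 1))) (h₂ : |ξ₂ - η₂| ≤ δ / R ^ n)
    (hξ : dni (ξ₁ * m₁ + ξ₂ * m₂) < δ / R) (hη : dni (η₁ * m₁ + η₂ * m₂) < δ / R) :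
    |ξ₂ - η₂| < 3 * (δ / R ^ (n + 1)) := by
  set u := R ^ n
  have hu0 : 0 < u := pow_pos hR n
  have hpow : R ^ (n + 1) = u * R := pow_succ R n
  have hpow2 : R ^ (2 * (n + 1)) = (u * R) ^ 2 := by rw [mul_comm, pow_mul, hpow]
  rw [hpow] at hm₂u ⊢
  rw [hpow2] at h₁
  set A := |m₂|
  have hA : 0 < A := hu0.trans_le hm₂l
  have hAuR : A * A ≤ (u * R) * A := mul_le_mul_of_nonneg_right hm₂u hA.le
  set h := δ / (u * R) with hh
  have hε : δ / R = h * u := by rw [hh]; field_simp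
  have hw : δ / (u * R) ^ 2 * ((u * R) * A) = h * A := by rw [hh]; field_simp
  have hfirst : |ξ₁ - η₁| * |m₁| ≤ h * A := by
    rw [← hw]
    refine mul_le_mul h₁ (hm₁.trans ?_) (abs_nonneg _) (by positivity)
    rw [← sq_abs, sq]
    exact hAuR
  have hsecond : |ξ₂ - η₂| * A ≤ δ * R := by
    calc |ξ₂ - η₂| * A ≤ δ / u * (u * R) :=
          mul_le_mul h₂ hm₂u (abs_nonneg _) (by positivity)
      _ = δ * R := by field_simp
  have hhA : h * A ≤ δ := by
    calc h * A ≤ h * (u * R) := mul_le_mul_of_nonneg_left hm₂u (by positivity)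
      _ = δ := by rw [hh]; field_simp
  have key := abs_sub_mul_lt_of_dni_lt hξ hη (by linarith)
  have hεA : δ / R ≤ h * A := by
    rw [hε]; exact mul_le_mul_of_nonneg_left hm₂l (by positivity)
  have : |ξ₂ - η₂| * A < 3 * h * A := by linarith
  exact lt_of_mul_lt_mul_right this hA.le

lemma abs_sub_le_of_mem_Icc_of_lt {b h ξ η : ℝ} {j j' N : ℕ} (hh : 0 ≤ h) (hj : j < N)
    (hj' : j' < N) (hξ : ξ ∈ Set.Icc (b + j * h) (b + (j + 1) * h))
    (hη : η ∈ Set.Icc (b + j' * h) (b + (j' + 1) * h)) : |ξ - η| ≤ N * h := by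
  have hcol : ∀ {i : ℕ}, i < N → Set.Icc (b + i * h) (b + (i + 1) * h) ⊆ Set.Icc b (b + N * h) := by
    intro i hi
    have hi' : (i : ℝ) + 1 ≤ N := by exact_mod_cast hi
    exact Set.Icc_subset_Icc (by nlinarith) (by nlinarith)
  simpa [Real.dist_eq] using Real.dist_le_of_mem_Icc (hcol hj hξ) (hcol hj' hη)

lemma lt_add_of_mem_Icc_of_abs_sub_lt {b h ξ η : ℝ} {j j' k : ℕ} (hh : 0 < h)
    (hξ : ξ ∈ Set.Icc (b + j * h) (b + (j + 1) * h))
    (hη : η ∈ Set.Icc (b + j' * h) (b + (j' + 1) * h)) (hk : |ξ - η| < k * h) :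
    j < j' + 1 + k := by
  have hmul : ((j : ℝ) - j' - 1) * h < k * h := by
    nlinarith [le_abs_self (ξ - η), hξ.1, hη.2]
  have : (j : ℝ) < j' + 1 + k := by linarith [lt_of_mul_lt_mul_right hmul hh.le]
  exact_mod_cast this

lemma card_le_add_one_of_forall_le_add {s : Finset ℕ} {k : ℕ}
    (hs : ∀ a ∈ s, ∀ b ∈ s, a ≤ b + k) : s.card ≤ k + 1 := by
  rcases s.eq_empty_or_nonempty with rfl | hne
  · simp
  · calc s.card ≤ (Finset.Icc (s.min' hne) (s.min' hne + k)).card :=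
          Finset.card_le_card fun a ha =>
            Finset.mem_Icc.2 ⟨s.min'_le a ha, hs a ha _ (s.min'_mem hne)⟩
      _ = k + 1 := by rw [Nat.card_Icc]; omega

lemma ncard_le_mul_of_forall_le_add {ι : Type*} [Fintype ι] {N k : ℕ} (S : Set (ι × Fin N))
    (hS : ∀ i (j j' : Fin N), (i, j) ∈ S → (i, j') ∈ S → (j : ℕ) ≤ j' + k) :
    S.ncard ≤ Fintype.card ι * (k + 1) := by
  classical
  rw [Set.ncard_eq_toFinset_card', Finset.card_eq_sum_card_fiberwise (f := Prod.fst)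
    (t := Finset.univ) (by simp)]
  calc ∑ i, {p ∈ S.toFinset | p.1 = i}.card ≤ ∑ _i : ι, (k + 1) := Finset.sum_le_sum fun i _ => ?_
    _ = Fintype.card ι * (k + 1) := by simp
  rw [← Finset.card_image_of_injOn (f := fun p : ι × Fin N => (p.2 : ℕ))]
  · apply card_le_add_one_of_forall_le_add
    simp only [Finset.mem_image, Finset.mem_filter, Set.mem_toFinset]
    rintro _ ⟨⟨i, j⟩, ⟨hj, rfl⟩, rfl⟩ _ ⟨⟨i, j'⟩, ⟨hj', rfl⟩, rfl⟩
    exact hS _ j j' hj hj'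
  · rintro ⟨i, j⟩ hj ⟨i', j'⟩ hj' hjj'
    simp only [Finset.coe_filter, Set.mem_toFinset, Set.mem_ofPred_eq] at hj hj'
    simp only at hjj'
    rw [hj.2, hj'.2, Fin.ext hjj']

/-- counting dangerous subrectangles for a type-2 vector. -/
theorem stmt_7 : ∃ R₀ : ℕ, ∀ R : ℕ, R₀ ≤ R → 2 ≤ R → ∀ n : ℕ, 1 ≤ n →
    ∀ m₁ m₂ : ℤ, |(m₁ : ℝ)| ≤ (m₂ : ℝ) ^ 2 →
    (R : ℝ) ^ n ≤ |(m₂ : ℝ)| → |(m₂ : ℝ)| ≤ (R : ℝ) ^ (n + 1) →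
    ∀ b₁ b₂ : ℝ,
    let δ : ℝ := 1 / (R : ℝ) ^ 3
    let ε : ℝ := δ / R
    {ij : Fin (R ^ 2) × Fin R |
      ∃ ξ₁ ξ₂ : ℝ,
        ξ₁ ∈ Set.Icc (b₁ + (ij.1 : ℝ) * (δ / (R : ℝ) ^ (2 * (n + 1))))
          (b₁ + ((ij.1 : ℝ) + 1) * (δ / (R : ℝ) ^ (2 * (n + 1)))) ∧
        ξ₂ ∈ Set.Icc (b₂ + (ij.2 : ℝ) * (δ / (R : ℝ) ^ (n + 1)))
          (b₂ + ((ij.2 : ℝ) + 1) * (δ / (R : ℝ) ^ (n + 1))) ∧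
        dni (ξ₁ * m₁ + ξ₂ * m₂) < ε}.ncard ≤ 6 * R ^ 2 := by
  refine ⟨2, fun R _ hR n _ m₁ m₂ hm₁ hm₂l hm₂u b₁ b₂ => ?_⟩
  intro δ ε
  have hR2 : (2 : ℝ) ≤ R := by exact_mod_cast hR
  have hδ : 0 < δ := by positivity
  have hδR : δ + δ * R < 1 - 2 * (δ / R) := by
    have hsum : δ + δ * R + 2 * (δ / R) = (R + R ^ 2 + 2) / (R : ℝ) ^ 4 := by
      simp only [δ]; field_simp
    have hlt : (R + R ^ 2 + 2) / (R : ℝ) ^ 4 < 1 := by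
      rw [div_lt_one (by positivity)]
      nlinarith [sq_nonneg ((R : ℝ) ^ 2 - 4), sq_nonneg ((R : ℝ) - 2)]
    linarith
  refine (ncard_le_mul_of_forall_le_add (k := 3) _ ?_).trans ?_
  · rintro i j j' ⟨ξ₁, ξ₂, hξ₁, hξ₂, hξ⟩ ⟨η₁, η₂, hη₁, hη₂, hη⟩
    dsimp only at hξ₁ hξ₂ hη₁ hη₂
    have h₁ : |ξ₁ - η₁| ≤ δ / (R : ℝ) ^ (2 * (n + 1)) := by
      simpa [Real.dist_eq, add_mul] using Real.dist_le_of_mem_Icc hξ₁ hη₁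
    have h₂ : |ξ₂ - η₂| ≤ δ / (R : ℝ) ^ n := by
      have := abs_sub_le_of_mem_Icc_of_lt (by positivity) j.isLt j'.isLt hξ₂ hη₂
      rwa [pow_succ, ← div_div, mul_div_cancel₀ _ (by positivity)] at this
    have := lt_add_of_mem_Icc_of_abs_sub_lt (k := 3) (by positivity) hξ₂ hη₂ <| by
      exact_mod_cast abs_sub_lt_three_div_of_dni_lt (by positivity) hδ hδR hm₁ hm₂l hm₂u
        h₁ h₂ hξ hη
    omega
  · simp only [Fintype.card_fin]
    omega
end

section
/- If θ₁ or θ₂ is rational, or if 1, θ₁, θ₂ are linearly dependent over ℚ, then BAD^Θ(2/3, 1/3) is non-empty. -/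
open scoped BigOperators

/-! If `a + b θ₁ + c θ₂ = 0` with `(b, c) ≠ 0`, pick `η` with `b η₁ + c η₂ = 1/2`. Then for every `q`,
`b (qθ₁ - η₁) + c (qθ₂ - η₂) = -q a - 1/2` lies at distance `1/2` from `ℤ`, so
`1/2 ≤ |b| ‖qθ₁ - η₁‖ + |c| ‖qθ₂ - η₂‖`: one of the two distances is at least `1/(2(|b| + |c|))`,
even before multiplying by the weights `q^(2/3), q^(1/3) ≥ 1`. -/

lemma dni_intCast_mul_add_intCast_mul_le (b c : ℤ) (x y : ℝ) :
    dni (b * x + c * y) ≤ |(b : ℝ)| * dni x + |(c : ℝ)| * dni y := by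
  calc dni (b * x + c * y)
      ≤ |(b * x + c * y) - ((b * round x + c * round y : ℤ) : ℝ)| := round_le _ _
    _ = |(b : ℝ) * (x - round x) + c * (y - round y)| := by push_cast; ring_nf
    _ ≤ |(b : ℝ) * (x - round x)| + |(c : ℝ) * (y - round y)| := abs_add_le _ _
    _ = |(b : ℝ)| * dni x + |(c : ℝ)| * dni y := by simp only [abs_mul, dni]

lemma one_half_le_dni_intCast_add_one_half (m : ℤ) : 1 / 2 ≤ dni (m + 1 / 2) := by
  have hne : 2 * (m - round ((m : ℝ) + 1 / 2)) + 1 ≠ 0 := by omega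
  have hone : (1 : ℝ) ≤ |((2 * (m - round ((m : ℝ) + 1 / 2)) + 1 : ℤ) : ℝ)| := by
    rw [← Int.cast_abs]; exact_mod_cast Int.one_le_abs hne
  have htwice : |((2 * (m - round ((m : ℝ) + 1 / 2)) + 1 : ℤ) : ℝ)| = 2 * dni (m + 1 / 2) := by
    rw [dni, ← abs_of_pos (two_pos : (0 : ℝ) < 2), ← abs_mul]
    congr 1
    push_cast
    ring
  linarith

lemma abs_intCast_add_abs_intCast_pos {b c : ℤ} (hbc : b ≠ 0 ∨ c ≠ 0) :
    0 < |(b : ℝ)| + |(c : ℝ)| := by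
  rcases hbc with hb | hc
  · have := abs_pos.2 (Int.cast_ne_zero.2 hb : (b : ℝ) ≠ 0); positivity
  · have := abs_pos.2 (Int.cast_ne_zero.2 hc : (c : ℝ) ≠ 0); positivity

lemma le_max_dni_of_mul_add_mul_eq_intCast_add_half (b c m : ℤ) (hbc : b ≠ 0 ∨ c ≠ 0) (x y : ℝ)
    (h : b * x + c * y = m + 1 / 2) :
    1 / (2 * (|(b : ℝ)| + |(c : ℝ)|)) ≤ max (dni x) (dni y) := by
  have hpos := abs_intCast_add_abs_intCast_pos hbc
  have hhalf : 1 / 2 ≤ (|(b : ℝ)| + |(c : ℝ)|) * max (dni x) (dni y) :=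
    calc (1 : ℝ) / 2 ≤ dni (b * x + c * y) := h ▸ one_half_le_dni_intCast_add_one_half m
      _ ≤ |(b : ℝ)| * dni x + |(c : ℝ)| * dni y := dni_intCast_mul_add_intCast_mul_le b c x y
      _ ≤ (|(b : ℝ)| + |(c : ℝ)|) * max (dni x) (dni y) := by
        rw [add_mul]
        gcongr
        · exact le_max_left _ _
        · exact le_max_right _ _
  rw [div_le_iff₀ (by positivity)]
  linarith

lemma badt_of_intCast_relation {θ₁ θ₂ η₁ η₂ : ℝ} {a b c : ℤ} (hbc : b ≠ 0 ∨ c ≠ 0)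
    (hrel : (a : ℝ) + b * θ₁ + c * θ₂ = 0) (hη : (b : ℝ) * η₁ + c * η₂ = 1 / 2) :
    BADT θ₁ θ₂ η₁ η₂ := by
  have hpos := abs_intCast_add_abs_intCast_pos hbc
  refine ⟨1 / (2 * (|(b : ℝ)| + |(c : ℝ)|)), by positivity, fun q hq => ?_⟩
  have hq : (1 : ℝ) ≤ q := by exact_mod_cast hq
  have hdist : b * (q * θ₁ - η₁) + c * (q * θ₂ - η₂) = ((-(q * a) - 1 : ℤ) : ℝ) + 1 / 2 := by
    push_cast; linear_combination (q : ℝ) * hrel - hη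
  calc 1 / (2 * (|(b : ℝ)| + |(c : ℝ)|))
      ≤ max (dni (q * θ₁ - η₁)) (dni (q * θ₂ - η₂)) :=
        le_max_dni_of_mul_add_mul_eq_intCast_add_half b c _ hbc _ _ hdist
    _ ≤ max ((q : ℝ) ^ ((2 : ℝ) / 3) * dni (q * θ₁ - η₁))
          ((q : ℝ) ^ ((1 : ℝ) / 3) * dni (q * θ₂ - η₂)) := by
        gcongr <;> exact le_mul_of_one_le_left (abs_nonneg _) (Real.one_le_rpow hq (by norm_num))

lemma exists_badt_of_intCast_relation {θ₁ θ₂ : ℝ} {a b c : ℤ} (hbc : b ≠ 0 ∨ c ≠ 0)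
    (hrel : (a : ℝ) + b * θ₁ + c * θ₂ = 0) : ∃ η₁ η₂ : ℝ, BADT θ₁ θ₂ η₁ η₂ := by
  rcases hbc with hb | hc
  · have hb' : (b : ℝ) ≠ 0 := Int.cast_ne_zero.2 hb
    exact ⟨1 / (2 * b), 0, badt_of_intCast_relation (Or.inl hb) hrel (by field_simp; ring)⟩
  · have hc' : (c : ℝ) ≠ 0 := Int.cast_ne_zero.2 hc
    exact ⟨0, 1 / (2 * c), badt_of_intCast_relation (Or.inr hc) hrel (by field_simp; ring)⟩

lemma neg_num_add_den_mul_eq_zero (r : ℚ) : ((-r.num : ℤ) : ℝ) + ((r.den : ℤ) : ℝ) * r = 0 := by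
  have := congrArg (Rat.cast : ℚ → ℝ) r.den_mul_eq_num
  push_cast at this ⊢
  linarith

/-- the degenerate (rational/dependent) case. -/
theorem stmt_10 (θ₁ θ₂ : ℝ)
    (h : (∃ r : ℚ, θ₁ = (r : ℝ)) ∨ (∃ r : ℚ, θ₂ = (r : ℝ)) ∨
      ∃ a b c : ℤ, ¬(a = 0 ∧ b = 0 ∧ c = 0) ∧
        (a : ℝ) + (b : ℝ) * θ₁ + (c : ℝ) * θ₂ = 0) :
    ∃ η₁ η₂ : ℝ, BADT θ₁ θ₂ η₁ η₂ := by
  obtain ⟨a, b, c, hbc, hrel⟩ :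
      ∃ a b c : ℤ, (b ≠ 0 ∨ c ≠ 0) ∧ (a : ℝ) + b * θ₁ + c * θ₂ = 0 := by
    rcases h with ⟨r, rfl⟩ | ⟨r, rfl⟩ | ⟨a, b, c, habc, hrel⟩
    · exact ⟨-r.num, r.den, 0, Or.inl (by exact_mod_cast r.den_nz),
        by simpa using neg_num_add_den_mul_eq_zero r⟩
    · exact ⟨-r.num, 0, r.den, Or.inr (by exact_mod_cast r.den_nz),
        by simpa using neg_num_add_den_mul_eq_zero r⟩
    · refine ⟨a, b, c, ?_, hrel⟩
      by_contra! hbc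
      obtain ⟨rfl, rfl⟩ := hbc
      exact habc ⟨by simpa using hrel, rfl, rfl⟩
  exact exists_badt_of_intCast_relation hbc hrel
end
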